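/- Let v, u be points of an n-point set P ⊆ [0,1]² such that every cell of the regular √n × √n grid on [0,1]² contains at most b points of P. Let r > 0 and let N(x) = {p ∈ P : ‖p − x‖ ≤ r}. Then |N(v) Δ N(u)| ≤ b · (n · Area(D(v,r) Δ D(u,r)) + c·(r·√n + 1)) for an absolute constant c, where D(x,r) is the disk of radius r about x. -/

import Mathlib

open MeasureTheory Metric
open scoped Classical

/-- `p` lies in cell `(i, j)` of the regular `m × m` grid on the unit square
(cells are closed squares of side `1/m`). -/
def InCell (m : ℕ) (i j : Fin m) (p : EuclideanSpace ℝ (Fin 2)) : Prop :=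
  (i : ℝ) / m ≤ p 0 ∧ p 0 ≤ ((i : ℝ) + 1) / m ∧
  (j : ℝ) / m ≤ p 1 ∧ p 1 ≤ ((j : ℝ) + 1) / m

/-!
Each point of `N(v) Δ N(u)` lies in a grid cell holding at most `b` points of `P`, so it suffices
to count the cells meeting `D(v,r) Δ D(u,r)`. The open cells are disjoint of area `1/n`, so at most
`n · Area` cells lie inside the symmetric difference. A cell meeting it without lying inside is
connected, hence meets one of the two boundary circles; those cells lie in an annulus of width
`O(1/√n)` around the circle, whose area bounds their number by `O(r√n + 1)`.
-/

open Set Finset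
open Real
open scoped ENNReal symmDiff

lemma eq_of_mem_Ioo_div {m i j : ℕ} {t : ℝ} (hi : t ∈ Ioo ((i : ℝ) / m) ((i + 1) / m))
    (hj : t ∈ Ioo ((j : ℝ) / m) ((j + 1) / m)) : i = j := by
  rcases Nat.eq_zero_or_pos m with rfl | hm
  · simp at hi
  have hmR : (0 : ℝ) < m := by exact_mod_cast hm
  simp only [Set.mem_Ioo, div_lt_iff₀ hmR, lt_div_iff₀ hmR] at hi hj
  have h1 : (i : ℝ) < j + 1 := by linarith
  have h2 : (j : ℝ) < i + 1 := by linarith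
  norm_cast at h1 h2
  omega

section Grid

variable {ι : Type*}

def gridCell (m : ℕ) (q : ι → Fin m) : Set (EuclideanSpace ℝ ι) :=
  {p | ∀ k, p k ∈ Icc ((q k : ℝ) / m) ((q k + 1) / m)}

def openGridCell (m : ℕ) (q : ι → Fin m) : Set (EuclideanSpace ℝ ι) :=
  {p | ∀ k, p k ∈ Ioo ((q k : ℝ) / m) ((q k + 1) / m)}

lemma exists_fin_mem_Icc_div {m : ℕ} (hm : 0 < m) {t : ℝ} (ht : t ∈ Icc (0 : ℝ) 1) :
    ∃ i : Fin m, t ∈ Icc ((i : ℝ) / m) ((i + 1) / m) := by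
  have hmR : (0 : ℝ) < m := by exact_mod_cast hm
  have htm : 0 ≤ t * m := by nlinarith [ht.1]
  obtain ⟨i, him, hi⟩ : ∃ i < m, (i : ℝ) ≤ t * m ∧ t * m ≤ i + 1 := by
    rcases lt_or_ge ⌊t * m⌋₊ m with h | h
    · exact ⟨_, h, Nat.floor_le htm, (Nat.lt_floor_add_one _).le⟩
    · refine ⟨m - 1, by omega, ?_, ?_⟩
      · calc ((m - 1 : ℕ) : ℝ) ≤ ⌊t * m⌋₊ := by exact_mod_cast h.trans' (Nat.sub_le m 1)
          _ ≤ t * m := Nat.floor_le htm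
      · rw [Nat.cast_sub hm, Nat.cast_one, sub_add_cancel]
        nlinarith [ht.2]
  exact ⟨⟨i, him⟩, (div_le_iff₀ hmR).2 hi.1, (le_div_iff₀ hmR).2 hi.2⟩

lemma exists_mem_gridCell {m : ℕ} (hm : 0 < m) {p : EuclideanSpace ℝ ι}
    (hp : ∀ k, p k ∈ Icc (0 : ℝ) 1) : ∃ q, p ∈ gridCell m q := by
  choose q hq using fun k => exists_fin_mem_Icc_div hm (hp k)
  exact ⟨q, hq⟩

lemma openGridCell_subset_gridCell (m : ℕ) (q : ι → Fin m) : openGridCell m q ⊆ gridCell m q :=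
  fun _ hp k => Ioo_subset_Icc_self (hp k)

lemma convex_gridCell (m : ℕ) (q : ι → Fin m) : Convex ℝ (gridCell m q) := by
  have : gridCell m q = ⋂ k, EuclideanSpace.proj k ⁻¹' Icc ((q k : ℝ) / m) ((q k + 1) / m) := by
    ext p; simp [gridCell]
  rw [this]
  exact convex_iInter fun k => (convex_Icc _ _).linear_preimage (EuclideanSpace.proj k).toLinearMap

lemma openGridCell_eq_preimage (m : ℕ) (q : ι → Fin m) : openGridCell m q =
    WithLp.ofLp ⁻¹' univ.pi fun k => Ioo ((q k : ℝ) / m) ((q k + 1) / m) := by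
  ext p; simp [openGridCell]

lemma pairwiseDisjoint_openGridCell (m : ℕ) :
    (univ : Set (ι → Fin m)).PairwiseDisjoint (openGridCell m) := by
  intro q _ q' _ hqq'
  obtain ⟨k, hk⟩ := Function.ne_iff.mp hqq'
  refine Set.disjoint_left.mpr fun p hp hp' => hk (Fin.ext ?_)
  exact eq_of_mem_Ioo_div (hp k) (hp' k)

variable [Fintype ι]

lemma measurableSet_openGridCell (m : ℕ) (q : ι → Fin m) : MeasurableSet (openGridCell m q) := by
  rw [openGridCell_eq_preimage]
  exact (PiLp.volume_preserving_ofLp ι).measurable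
    (MeasurableSet.univ_pi fun _ => measurableSet_Ioo)

lemma volume_openGridCell (m : ℕ) (q : ι → Fin m) :
    volume (openGridCell m q) = ENNReal.ofReal (1 / m) ^ Fintype.card ι := by
  rw [openGridCell_eq_preimage, (PiLp.volume_preserving_ofLp ι).measure_preimage
    (MeasurableSet.univ_pi fun _ => measurableSet_Ioo).nullMeasurableSet, Real.volume_pi_Ioo]
  simp [add_div]

lemma card_le_pow_mul_volume_real {m : ℕ} (hm : 0 < m) {A : Set (EuclideanSpace ℝ ι)}
    (hA : volume A ≠ ∞) (Q : Finset (ι → Fin m)) (hQ : ∀ q ∈ Q, openGridCell m q ⊆ A) :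
    (#Q : ℝ) ≤ (m : ℝ) ^ Fintype.card ι * volume.real A := by
  have hvol : (#Q : ℝ≥0∞) * ENNReal.ofReal (1 / m) ^ Fintype.card ι ≤ volume A :=
    calc (#Q : ℝ≥0∞) * ENNReal.ofReal (1 / m) ^ Fintype.card ι
        = ∑ q ∈ Q, volume (openGridCell m q) := by simp [volume_openGridCell]
      _ = volume (⋃ q ∈ Q, openGridCell m q) :=
        (measure_biUnion_finset ((pairwiseDisjoint_openGridCell m).subset (subset_univ _))
          fun q _ => measurableSet_openGridCell m q).symm
      _ ≤ volume A := measure_mono (iUnion₂_subset hQ)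
  have hvol' := ENNReal.toReal_mono hA hvol
  rw [ENNReal.toReal_mul, ENNReal.toReal_pow, ENNReal.toReal_ofReal (by positivity),
    ENNReal.toReal_natCast] at hvol'
  have hmR : (0 : ℝ) < m := by exact_mod_cast hm
  calc (#Q : ℝ) = (m : ℝ) ^ Fintype.card ι * (#Q * (1 / m) ^ Fintype.card ι) := by
        rw [mul_left_comm, ← mul_pow, mul_one_div_cancel hmR.ne', one_pow, mul_one]
    _ ≤ (m : ℝ) ^ Fintype.card ι * volume.real A := by gcongr; exact hvol'

lemma dist_le_of_mem_gridCell {m : ℕ} {q : ι → Fin m} {x y : EuclideanSpace ℝ ι}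
    (hx : x ∈ gridCell m q) (hy : y ∈ gridCell m q) :
    dist x y ≤ √(Fintype.card ι) / m := by
  have hcoord : ∀ k, dist (x k) (y k) ^ 2 ≤ (1 / m) ^ 2 := fun k => by
    obtain ⟨hx1, hx2⟩ := hx k
    obtain ⟨hy1, hy2⟩ := hy k
    rw [add_div] at hx2 hy2
    refine pow_le_pow_left₀ dist_nonneg ?_ 2
    rw [Real.dist_eq, abs_sub_le_iff]
    constructor <;> linarith
  calc dist x y = √(∑ k, dist (x k) (y k) ^ 2) := EuclideanSpace.dist_eq x y
    _ ≤ √(∑ _k : ι, (1 / (m : ℝ)) ^ 2) := Real.sqrt_le_sqrt (sum_le_sum fun k _ => hcoord k)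
    _ = √(Fintype.card ι) / m := by
      rw [sum_const, card_univ, nsmul_eq_mul, Real.sqrt_mul (Nat.cast_nonneg _),
        Real.sqrt_sq (by positivity), mul_one_div]

lemma card_filter_le_mul_card_gridCell_inter_nonempty [DecidableEq ι] {m b : ℕ} (hm : 0 < m)
    {P : Finset (EuclideanSpace ℝ ι)} (hP : ∀ p ∈ P, ∀ k, p k ∈ Icc (0 : ℝ) 1)
    (hb : ∀ q, #{p ∈ P | p ∈ gridCell m q} ≤ b) (A : Set (EuclideanSpace ℝ ι)) :
    #{p ∈ P | p ∈ A} ≤ b * #{q : ι → Fin m | (gridCell m q ∩ A).Nonempty} := by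
  have : NeZero m := ⟨hm.ne'⟩
  choose! f hf using fun p (hp : p ∈ P) => exists_mem_gridCell hm (hP p hp)
  refine card_le_mul_card_image_of_maps_to (f := f) (fun p hp => ?_) b fun q _ => ?_
  · obtain ⟨hpP, hpA⟩ := Finset.mem_filter.1 hp
    exact Finset.mem_filter.2 ⟨Finset.mem_univ _, p, hf p hpP, hpA⟩
  · refine (Finset.card_le_card fun p hp => ?_).trans (hb q)
    obtain ⟨hpPA, rfl⟩ := Finset.mem_filter.1 hp
    exact Finset.mem_filter.2 ⟨(Finset.mem_filter.1 hpPA).1, hf p (Finset.mem_filter.1 hpPA).1⟩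

end Grid

section Metric

variable {X : Type*} [PseudoMetricSpace X] {s : Set X}

lemma IsPreconnected.inter_sphere_nonempty (hs : IsPreconnected s) {a b x : X} {r : ℝ}
    (ha : a ∈ s) (hb : b ∈ s) (har : dist a x ≤ r) (hbr : r ≤ dist b x) :
    (s ∩ sphere x r).Nonempty := by
  obtain ⟨z, hz, hzr⟩ := hs.intermediate_value ha hb
    (continuous_id.dist continuous_const).continuousOn ⟨har, hbr⟩
  exact ⟨z, hz, hzr⟩

lemma IsPreconnected.subset_symmDiff_or_inter_sphere_nonempty (hs : IsPreconnected s)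
    {p v u : X} {r : ℝ} (hp : p ∈ s) (hpS : p ∈ closedBall v r ∆ closedBall u r) :
    s ⊆ closedBall v r ∆ closedBall u r ∨ (s ∩ sphere v r).Nonempty ∨
      (s ∩ sphere u r).Nonempty := by
  rw [or_iff_not_imp_left, Set.not_subset]
  rintro ⟨x, hx, hxS⟩
  simp only [Set.mem_symmDiff, mem_closedBall, not_or, not_and, not_not] at hpS hxS
  rcases hpS with ⟨hpv, hpu⟩ | ⟨hpu, hpv⟩ <;> by_cases hxu : dist x u ≤ r
  · exact Or.inr (hs.inter_sphere_nonempty hx hp hxu (le_of_not_ge hpu))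
  · exact Or.inl (hs.inter_sphere_nonempty hp hx hpv (le_of_not_ge fun h => hxu (hxS.1 h)))
  · exact Or.inl (hs.inter_sphere_nonempty hx hp (hxS.2 hxu) (le_of_not_ge hpv))
  · exact Or.inr (hs.inter_sphere_nonempty hp hx hpu (le_of_not_ge hxu))

end Metric

lemma volume_real_closedBall_diff_ball (x : EuclideanSpace ℝ (Fin 2)) {ρ R : ℝ} (hρ : 0 ≤ ρ)
    (hρR : ρ ≤ R) : volume.real (closedBall x R \ ball x ρ) = π * (R ^ 2 - ρ ^ 2) := by
  rw [measureReal_sdiff (ball_subset_closedBall.trans (closedBall_subset_closedBall hρR))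
    measurableSet_ball measure_closedBall_lt_top.ne]
  simp [measureReal_def, ENNReal.toReal_ofReal hρ, ENNReal.toReal_ofReal (hρ.trans hρR), pi_nonneg]
  ring

lemma card_gridCell_inter_sphere_le {m : ℕ} (hm : 0 < m) (x : EuclideanSpace ℝ (Fin 2)) {r : ℝ}
    (hr : 0 ≤ r) : (#{q : Fin 2 → Fin m | (gridCell m q ∩ sphere x r).Nonempty} : ℝ) ≤
      8 * π * (r * m + 2) := by
  have hmR : (0 : ℝ) < m := by exact_mod_cast hm
  set δ : ℝ := 2 / m with hδ
  have hδ0 : 0 ≤ δ := by positivity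
  have hdiam : ∀ q : Fin 2 → Fin m, ∀ y ∈ gridCell m q, ∀ z ∈ gridCell m q, dist y z ≤ δ := by
    intro q y hy z hz
    refine (dist_le_of_mem_gridCell hy hz).trans (div_le_div_of_nonneg_right ?_ hmR.le)
    rw [Fintype.card_fin, Nat.cast_two]
    exact Real.sqrt_le_iff.2 ⟨by norm_num, by norm_num⟩
  set ρ := max (r - δ) 0
  have hannulus : ∀ q ∈ ({q | (gridCell m q ∩ sphere x r).Nonempty} : Finset (Fin 2 → Fin m)),
      openGridCell m q ⊆ closedBall x (r + δ) \ ball x ρ := by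
    intro q hq y hy
    obtain ⟨z, hzq, hzx⟩ := (Finset.mem_filter.1 hq).2
    have hyz := hdiam q y (openGridCell_subset_gridCell m q hy) z hzq
    rw [mem_sphere] at hzx
    refine ⟨?_, not_lt.2 (max_le ?_ dist_nonneg)⟩
    · rw [mem_closedBall]; linarith [dist_triangle y z x]
    · linarith [dist_triangle z y x, dist_comm y z]
  have hfin : volume (closedBall x (r + δ) \ ball x ρ) ≠ ∞ :=
    ((measure_mono sdiff_subset).trans_lt measure_closedBall_lt_top).ne
  have hρ : ρ ≤ r + δ := max_le (by linarith) (by linarith)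
  have hsq : (r + δ) ^ 2 - ρ ^ 2 ≤ 4 * δ * (r + δ) := by
    rcases max_cases (r - δ) 0 with ⟨h, -⟩ | ⟨h, h'⟩ <;> simp only [ρ, h] <;> nlinarith
  calc _ ≤ (m : ℝ) ^ 2 * volume.real (closedBall x (r + δ) \ ball x ρ) := by
        simpa using card_le_pow_mul_volume_real hm hfin _ hannulus
    _ = (m : ℝ) ^ 2 * (π * ((r + δ) ^ 2 - ρ ^ 2)) := by
        rw [volume_real_closedBall_diff_ball x (le_max_right _ _) hρ]
    _ ≤ (m : ℝ) ^ 2 * (π * (4 * δ * (r + δ))) := by gcongr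
    _ = 8 * π * (r * m + 2) := by rw [hδ]; field_simp; ring

lemma inCell_iff_mem_gridCell {m : ℕ} (q : Fin 2 → Fin m) (p : EuclideanSpace ℝ (Fin 2)) :
    InCell m (q 0) (q 1) p ↔ p ∈ gridCell m q := by
  simp [InCell, gridCell, Fin.forall_fin_two, and_assoc]

lemma card_gridCell_inter_symmDiff_closedBall_le {m : ℕ} (hm : 0 < m)
    (v u : EuclideanSpace ℝ (Fin 2)) {r : ℝ} (hr : 0 ≤ r) :
    (#{q : Fin 2 → Fin m | (gridCell m q ∩ closedBall v r ∆ closedBall u r).Nonempty} : ℝ) ≤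
      m ^ 2 * volume.real (closedBall v r ∆ closedBall u r) + 16 * π * (r * m + 2) := by
  set S := closedBall v r ∆ closedBall u r
  let Qin : Finset (Fin 2 → Fin m) := {q | gridCell m q ⊆ S}
  let Qv : Finset (Fin 2 → Fin m) := {q | (gridCell m q ∩ sphere v r).Nonempty}
  let Qu : Finset (Fin 2 → Fin m) := {q | (gridCell m q ∩ sphere u r).Nonempty}
  have hsub : ({q | (gridCell m q ∩ S).Nonempty} : Finset (Fin 2 → Fin m)) ⊆ Qin ∪ Qv ∪ Qu := by
    intro q hq
    obtain ⟨p, hp, hpS⟩ := (Finset.mem_filter.1 hq).2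
    have := (convex_gridCell m q).isPreconnected.subset_symmDiff_or_inter_sphere_nonempty hp hpS
    simp only [Qin, Qv, Qu, Finset.mem_union, Finset.mem_filter, Finset.mem_univ, true_and]
    tauto
  have hSfin : volume S ≠ ∞ :=
    (isBounded_closedBall.union isBounded_closedBall).subset symmDiff_subset_union
      |>.measure_lt_top.ne
  have hQin : (#Qin : ℝ) ≤ m ^ 2 * volume.real S := by
    simpa using card_le_pow_mul_volume_real hm hSfin Qin fun q hq =>
      (openGridCell_subset_gridCell m q).trans (Finset.mem_filter.1 hq).2
  have hQv : (#Qv : ℝ) ≤ 8 * π * (r * m + 2) := card_gridCell_inter_sphere_le hm v hr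
  have hQu : (#Qu : ℝ) ≤ 8 * π * (r * m + 2) := card_gridCell_inter_sphere_le hm u hr
  have hunion : #(Qin ∪ Qv ∪ Qu) ≤ #Qin + #Qv + #Qu :=
    (Finset.card_union_le _ _).trans (Nat.add_le_add_right (Finset.card_union_le _ _) _)
  calc _ ≤ (#(Qin ∪ Qv ∪ Qu) : ℝ) := by exact_mod_cast Finset.card_le_card hsub
    _ ≤ #Qin + #Qv + #Qu := by exact_mod_cast hunion
    _ ≤ _ := by linarith

theorem points_in_symmDiff_of_disks :
    ∃ c : ℝ, 0 < c ∧
      ∀ (m b : ℕ) (P : Finset (EuclideanSpace ℝ (Fin 2))) (r : ℝ), 0 < r →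
        P.card = m ^ 2 →
        (∀ p ∈ P, ∀ i, 0 ≤ p i ∧ p i ≤ 1) →
        (∀ i j : Fin m, (P.filter (fun p => InCell m i j p)).card ≤ b) →
        ∀ v ∈ P, ∀ u ∈ P,
          (((P.filter fun p => dist p v ≤ r) \ (P.filter fun p => dist p u ≤ r) ∪
              (P.filter fun p => dist p u ≤ r) \ (P.filter fun p => dist p v ≤ r)).card : ℝ) ≤
            (b : ℝ) * ((m ^ 2 : ℝ) *
                (volume ((closedBall v r \ closedBall u r) ∪
                  (closedBall u r \ closedBall v r))).toReal
              + c * (r * Real.sqrt ((m : ℝ) ^ 2) + 1)) := by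
  refine ⟨32 * π, by positivity, ?_⟩
  intro m b P r hr hcard hbox hcell v hv u hu
  have hm : 0 < m := Nat.pos_of_ne_zero fun hm0 => by simp_all
  set S := closedBall v r ∆ closedBall u r
  have hT : (P.filter fun p => dist p v ≤ r) \ (P.filter fun p => dist p u ≤ r) ∪
      (P.filter fun p => dist p u ≤ r) \ (P.filter fun p => dist p v ≤ r) = {p ∈ P | p ∈ S} := by
    ext p
    simp only [S, Finset.mem_union, Finset.mem_sdiff, Finset.mem_filter, Set.mem_symmDiff,
      mem_closedBall]
    tauto
  have hpoints := card_filter_le_mul_card_gridCell_inter_nonempty hm hbox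
    (fun q => by simpa only [inCell_iff_mem_gridCell] using hcell (q 0) (q 1)) S
  have hcells := card_gridCell_inter_symmDiff_closedBall_le hm v u hr.le
  rw [hT, Real.sqrt_sq (Nat.cast_nonneg m)]
  calc (#{p ∈ P | p ∈ S} : ℝ) ≤ b * #{q : Fin 2 → Fin m | (gridCell m q ∩ S).Nonempty} := by
        exact_mod_cast hpoints
    _ ≤ b * (m ^ 2 * volume.real S + 32 * π * (r * m + 1)) := by
        gcongr
        nlinarith [pi_pos, mul_nonneg hr.le (Nat.cast_nonneg (α := ℝ) m)]
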